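/- Let V be a real Hilbert space, N ≥ 1, τ > 0. Let B : V →L[ℝ] V be continuous linear, symmetric (⟪B u, v⟫ = ⟪u, B v⟫) and nonnegative (⟪B u, u⟫ ≥ 0), and let K̂ : V →L[ℝ] V be continuous linear, symmetric and elliptic, i.e. there exists c > 0 with ⟪K̂ u, u⟫ ≥ c‖u‖² for all u ∈ V. Then for every g : ZMod N → V there exists a unique w : ZMod N → V such that for every n : ZMod N, (1/τ) • B (w n − w (n − 1)) + K̂ (w n) = g n. -/

import Mathlib

/-!
Summing the equations against `w n` turns the system into a bilinear form on `ℓ²(ZMod N; V)`.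
Its `K̂` part is coercive; its `B` part is nonnegative, because by symmetry and periodicity
`∑ ⟪B (w n - w (n - 1)), w n⟫ = ½ ∑ ⟪B (w n - w (n - 1)), w n - w (n - 1)⟫ ≥ 0`.
So the system operator is coercive, hence bijective by Lax–Milgram.
-/

open RealInnerProductSpace

section

variable {V : Type*} [NormedAddCommGroup V] [InnerProductSpace ℝ V] {G : Type*} [AddGroup G]

theorem ContinuousLinearMap.bijective_of_coercive [CompleteSpace V] (T : V →L[ℝ] V) {c : ℝ}
    (hc : 0 < c) (hT : ∀ u, c * ‖u‖ ^ 2 ≤ ⟪T u, u⟫) : Function.Bijective T := by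
  have hcoer : IsCoercive ((innerSL ℝ).comp T) :=
    ⟨c, hc, fun u => by simpa [sq, mul_assoc] using hT u⟩
  have hE : ⇑hcoer.continuousLinearEquivOfBilin = T :=
    funext fun u => ext_inner_right ℝ fun v => hcoer.continuousLinearEquivOfBilin_apply u v
  exact hE ▸ hcoer.continuousLinearEquivOfBilin.bijective

-- With `G = ZMod N`, `a = 1` and `A = τ⁻¹ • B` this is the time-periodic implicit Euler system.
def periodicEulerOp (a : G) (A K : V →L[ℝ] V) : (G → V) →L[ℝ] (G → V) :=
  ContinuousLinearMap.pi fun n =>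
    let π : G → (G → V) →L[ℝ] V := ContinuousLinearMap.proj
    A.comp (π n - π (n - a)) + K.comp (π n)

@[simp]
theorem periodicEulerOp_apply (a : G) (A K : V →L[ℝ] V) (w : G → V) (n : G) :
    periodicEulerOp a A K w n = A (w n - w (n - a)) + K (w n) := by
  simp [periodicEulerOp]

variable [Fintype G]

-- Expanding `⟪A d, d⟫ ≥ 0` for `d = w n - w (n - a)` and reindexing `n ↦ n - a` shows
-- that the sum is half of `∑ n, ⟪A (w n - w (n - a)), w n - w (n - a)⟫`.
theorem sum_inner_sub_shift_nonneg (a : G)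
    (A : V →L[ℝ] V) (hsymm : ∀ u v, ⟪A u, v⟫ = ⟪u, A v⟫) (hnonneg : ∀ u, 0 ≤ ⟪A u, u⟫)
    (w : G → V) : 0 ≤ ∑ n, ⟪A (w n - w (n - a)), w n⟫ := by
  have hshift : ∑ n, ⟪A (w (n - a)), w (n - a)⟫ = ∑ n, ⟪A (w n), w n⟫ :=
    Fintype.sum_equiv (Equiv.subRight a) _ _ fun _ => rfl
  have hexpand : ∀ n, ⟪A (w n - w (n - a)), w n - w (n - a)⟫ =
      2 * ⟪A (w n - w (n - a)), w n⟫ - ⟪A (w n), w n⟫ + ⟪A (w (n - a)), w (n - a)⟫ := by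
    intro n
    simp only [map_sub, inner_sub_left, inner_sub_right, hsymm (w n) (w (n - a)),
      real_inner_comm (w n) (A (w (n - a)))]
    ring
  have hsum := Finset.sum_nonneg fun n (_ : n ∈ Finset.univ) => hnonneg (w n - w (n - a))
  simp only [hexpand, Finset.sum_add_distrib, Finset.sum_sub_distrib, hshift,
    ← Finset.mul_sum] at hsum
  linarith

theorem periodicEulerOp_coercive (a : G) {A K : V →L[ℝ] V}
    (hAsymm : ∀ u v, ⟪A u, v⟫ = ⟪u, A v⟫) (hAnonneg : ∀ u, 0 ≤ ⟪A u, u⟫) {c : ℝ}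
    (hK : ∀ u, c * ‖u‖ ^ 2 ≤ ⟪K u, u⟫) (w : PiLp 2 fun _ : G => V) :
    c * ‖w‖ ^ 2 ≤ ⟪WithLp.toLp 2 (periodicEulerOp a A K w.ofLp), w⟫ := by
  have hA := sum_inner_sub_shift_nonneg a A hAsymm hAnonneg w.ofLp
  have hK' : ∑ n, c * ‖w n‖ ^ 2 ≤ ∑ n, ⟪K (w n), w n⟫ :=
    Finset.sum_le_sum fun n _ => hK (w n)
  rw [PiLp.norm_sq_eq_of_L2, Finset.mul_sum, PiLp.inner_apply]
  simp only [periodicEulerOp_apply, inner_add_left, Finset.sum_add_distrib]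
  exact le_add_of_nonneg_of_le hA hK'

theorem periodicEulerOp_bijective [CompleteSpace V] (a : G) {A K : V →L[ℝ] V}
    (hAsymm : ∀ u v, ⟪A u, v⟫ = ⟪u, A v⟫) (hAnonneg : ∀ u, 0 ≤ ⟪A u, u⟫) {c : ℝ} (hc : 0 < c)
    (hK : ∀ u, c * ‖u‖ ^ 2 ≤ ⟪K u, u⟫) : Function.Bijective (periodicEulerOp a A K) := by
  -- Lax–Milgram is applied on `PiLp 2`, the Hilbert space `ℓ²(G; V)`; `G → V` has the sup norm.
  let e := PiLp.continuousLinearEquiv 2 ℝ fun _ : G => V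
  have hL2 : Function.Bijective
      (e.symm.toContinuousLinearMap ∘L periodicEulerOp a A K ∘L e.toContinuousLinearMap) :=
    ContinuousLinearMap.bijective_of_coercive _ hc (periodicEulerOp_coercive a hAsymm hAnonneg hK)
  convert e.bijective.comp (hL2.comp e.symm.bijective)
  ext; simp [e]

end

theorem stmt_6_general {V : Type*} [NormedAddCommGroup V] [InnerProductSpace ℝ V]
    [CompleteSpace V]
    (N : ℕ) [NeZero N] (τ : ℝ) (hτ : 0 < τ)
    (B : V →L[ℝ] V)
    (hBsymm : ∀ u v : V, ⟪B u, v⟫ = ⟪u, B v⟫)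
    (hBnonneg : ∀ u : V, 0 ≤ ⟪B u, u⟫)
    (Khat : V →L[ℝ] V)
    (c : ℝ) (hc : 0 < c)
    (hKhatell : ∀ u : V, c * ‖u‖ ^ 2 ≤ ⟪Khat u, u⟫) :
    ∀ g : ZMod N → V, ∃! w : ZMod N → V, ∀ n : ZMod N,
      (1 / τ) • B (w n - w (n - 1)) + Khat (w n) = g n := by
  intro g
  have hAsymm : ∀ u v, ⟪((1 / τ) • B) u, v⟫ = ⟪u, ((1 / τ) • B) v⟫ := fun u v => by
    simp only [smul_apply, real_inner_smul_left, real_inner_smul_right, hBsymm]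
  have hAnonneg : ∀ u, 0 ≤ ⟪((1 / τ) • B) u, u⟫ := fun u => by
    rw [smul_apply, real_inner_smul_left]
    exact mul_nonneg (by positivity) (hBnonneg u)
  simpa [funext_iff] using
    (periodicEulerOp_bijective 1 hAsymm hAnonneg hc hKhatell).existsUnique g

/-- Well-definedness of one step of the fixed-point iteration in Theorem 3:
the linear time-periodic time-invariant system has a unique solution. -/
theorem stmt_6 {V : Type*} [NormedAddCommGroup V] [InnerProductSpace ℝ V]
    [CompleteSpace V]
    (N : ℕ) [NeZero N] (τ : ℝ) (hτ : 0 < τ)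
    (B : V →L[ℝ] V)
    (hBsymm : ∀ u v : V, ⟪B u, v⟫ = ⟪u, B v⟫)
    (hBnonneg : ∀ u : V, 0 ≤ ⟪B u, u⟫)
    (Khat : V →L[ℝ] V)
    (hKhatsymm : ∀ u v : V, ⟪Khat u, v⟫ = ⟪u, Khat v⟫)
    (c : ℝ) (hc : 0 < c)
    (hKhatell : ∀ u : V, c * ‖u‖ ^ 2 ≤ ⟪Khat u, u⟫) :
    ∀ g : ZMod N → V, ∃! w : ZMod N → V, ∀ n : ZMod N,
      (1 / τ) • B (w n - w (n - 1)) + Khat (w n) = g n :=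
  stmt_6_general N τ hτ B hBsymm hBnonneg Khat c hc hKhatell
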